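/- Let F be a 3×3 real matrix with det F > 0 and let λ, μ be real constants. Then the Piola–Kirchhoff stress map G ↦ P(G) = λ ln(det G) G⁻ᵀ + μ(G − G⁻ᵀ) is Fréchet differentiable at F, and its derivative applied to any 3×3 real matrix H equals λ trace(F⁻¹·H) F⁻ᵀ − λ ln(det F) F⁻ᵀ·Hᵀ·F⁻ᵀ + μ(H + F⁻ᵀ·Hᵀ·F⁻ᵀ). (This is the exact Piola stress tangent 𝔸 = ∂P/∂F = λ[fᵗ⊗fᵗ + ln J 𝔻] + μ[𝕀 − 𝔻] applied to H, used to compute the consistent tangent in the Newton–Raphson scheme.) -/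

import Mathlib

/-!
The determinant is multilinear in the rows, so its derivative at `A` is
`H ↦ ∑ᵢ det (A with row i replaced by Hᵢ) = tr (adj A * H)` (Jacobi's formula), whence
`d (log ∘ det)_A H = tr (A⁻¹ * H)`. Inversion has derivative `H ↦ -A⁻¹ * H * A⁻¹`, as in any
Banach algebra. The tangent of the stress then follows from the chain and product rules.
-/

open Matrix

attribute [local instance] Matrix.normedAddCommGroup Matrix.normedSpace

namespace Matrix

variable {n : Type*} [Fintype n] [DecidableEq n]

theorem sum_det_updateRow {R : Type*} [CommRing R] (A H : Matrix n n R) :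
    ∑ i, (A.updateRow i (H i)).det = (A.adjugate * H).trace := by
  have row (i : n) : (A.updateRow i (H i)).det = ∑ j, A.adjugate j i * H i j := by
    rw [← cramer_transpose_apply, cramer_eq_adjugate_mulVec]
    simp only [← adjugate_transpose, mulVec, dotProduct, transpose_apply]
  simp only [row, trace, diag_apply, mul_apply]
  exact Finset.sum_comm

variable {𝕜 : Type*} [NontriviallyNormedField 𝕜]

def detContinuousMultilinearMap : ContinuousMultilinearMap 𝕜 (fun _ : n => n → 𝕜) 𝕜 :=
  ⟨(detRowAlternating : (n → 𝕜) [⋀^n]→ₗ[𝕜] 𝕜).toMultilinearMap, continuous_id.matrix_det⟩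

variable [CompleteSpace 𝕜]

theorem hasFDerivAt_det (A : Matrix n n 𝕜) :
    HasFDerivAt det
      (LinearMap.toContinuousLinearMap (traceLinearMap n 𝕜 𝕜 ∘ₗ LinearMap.mulLeft 𝕜 A.adjugate))
      A := by
  have h : HasFDerivAt det _ A := detContinuousMultilinearMap.hasFDerivAt A
  refine h.congr_fderiv (ContinuousLinearMap.ext fun H => ?_)
  exact (ContinuousMultilinearMap.linearDeriv_apply _ _ _).trans (sum_det_updateRow A H)

theorem hasFDerivAt_inv {A : Matrix n n 𝕜} (hA : IsUnit A.det) :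
    HasFDerivAt (fun G : Matrix n n 𝕜 => G⁻¹)
      (-LinearMap.toContinuousLinearMap (LinearMap.mulLeftRight 𝕜 (A⁻¹, A⁻¹))) A := by
  -- The `L∞`-operator norm makes matrices a complete normed algebra, and it induces the same
  -- topology as the entrywise norm, so the derivative of `Ring.inverse` transfers verbatim.
  let R : NormedRing (Matrix n n 𝕜) := Matrix.linftyOpNormedRing
  let _ : NormedAlgebra 𝕜 (Matrix n n 𝕜) := Matrix.linftyOpNormedAlgebra
  have : @CompleteSpace (Matrix n n 𝕜) R.toMetricSpace.toUniformSpace :=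
    (inferInstance : CompleteSpace (n → n → 𝕜))
  have h := hasFDerivAt_ringInverse (𝕜 := 𝕜) (A.isUnit_iff_isUnit_det.2 hA).unit
  simp only [IsUnit.unit_spec] at h
  rw [show (fun G : Matrix n n 𝕜 => G⁻¹) = Ring.inverse from funext nonsing_inv_eq_ringInverse]
  refine h.congr_fderiv (ContinuousLinearMap.ext fun H => ?_)
  simp only [← Ring.inverse_unit, IsUnit.unit_spec, ← nonsing_inv_eq_ringInverse]
  rfl

theorem hasFDerivAt_transpose_inv {A : Matrix n n 𝕜} (hA : IsUnit A.det) :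
    HasFDerivAt (fun G : Matrix n n 𝕜 => (G⁻¹)ᵀ)
      (LinearMap.toContinuousLinearMap
        ((transposeLinearEquiv n n 𝕜 𝕜).toLinearMap ∘ₗ (-LinearMap.mulLeftRight 𝕜 (A⁻¹, A⁻¹))))
      A :=
  (LinearMap.toContinuousLinearMap (transposeLinearEquiv n n 𝕜 𝕜).toLinearMap).hasFDerivAt.comp A
    (hasFDerivAt_inv hA)

theorem hasFDerivAt_log_det {A : Matrix n n ℝ} (hA : A.det ≠ 0) :
    HasFDerivAt (fun G : Matrix n n ℝ => Real.log G.det)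
      (LinearMap.toContinuousLinearMap (traceLinearMap n ℝ ℝ ∘ₗ LinearMap.mulLeft ℝ A⁻¹)) A := by
  refine ((Real.hasDerivAt_log hA).comp_hasFDerivAt A (hasFDerivAt_det A)).congr_fderiv
    (ContinuousLinearMap.ext fun H => ?_)
  show A.det⁻¹ * (A.adjugate * H).trace = (A⁻¹ * H).trace
  rw [inv_def, Ring.inverse_eq_inv, smul_mul, trace_smul, smul_eq_mul]

end Matrix

/-- The neo-Hookean Piola–Kirchhoff stress map
`G ↦ P(G) = λ ln(det G) G⁻ᵀ + μ(G − G⁻ᵀ)` is Fréchet differentiable at any `F`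
with `det F > 0`, and its derivative applied to `H` equals
`λ trace(F⁻¹·H) F⁻ᵀ − λ ln(det F) F⁻ᵀ·Hᵀ·F⁻ᵀ + μ(H + F⁻ᵀ·Hᵀ·F⁻ᵀ)`:
the exact Piola stress tangent `𝔸 = ∂P/∂F`. -/
theorem piola_stress_tangent
    (F : Matrix (Fin 3) (Fin 3) ℝ) (hF : 0 < F.det) (lam mu : ℝ) :
    ∃ D : Matrix (Fin 3) (Fin 3) ℝ →L[ℝ] Matrix (Fin 3) (Fin 3) ℝ,
      HasFDerivAt
        (fun G : Matrix (Fin 3) (Fin 3) ℝ =>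
          (lam * Real.log G.det) • (G⁻¹)ᵀ + mu • (G - (G⁻¹)ᵀ))
        D F ∧
      ∀ H : Matrix (Fin 3) (Fin 3) ℝ,
        D H = (lam * (F⁻¹ * H).trace) • (F⁻¹)ᵀ
              - (lam * Real.log F.det) • ((F⁻¹)ᵀ * Hᵀ * (F⁻¹)ᵀ)
              + mu • (H + (F⁻¹)ᵀ * Hᵀ * (F⁻¹)ᵀ) := by
  have hinvT := hasFDerivAt_transpose_inv (isUnit_iff_ne_zero.2 hF.ne')
  have hlog := (hasFDerivAt_log_det hF.ne').const_mul lam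
  refine ⟨_, (hlog.smul hinvT).add (((hasFDerivAt_id F).sub hinvT).const_smul mu), fun H => ?_⟩
  show (lam * Real.log F.det) • (-(F⁻¹ * H * F⁻¹))ᵀ + (lam * (F⁻¹ * H).trace) • (F⁻¹)ᵀ
      + mu • (H - (-(F⁻¹ * H * F⁻¹))ᵀ) = _
  simp only [transpose_neg, transpose_mul, Matrix.mul_assoc]
  module
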